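/- arXiv:1604.00954 — 6 statements merged into one kernel-verified Lean document; each statement's English description precedes it below -/
import Mathlib

section
/- Suppose the time-change formula holds: for every integer i and every bounded measurable f : ℝ^{t-s+1} → ℝ (s ≤ 0 ≤ t) vanishing when its coordinate at index 0 is zero, E[f(Θ_{s-i},…,Θ_{t-i})] = E[f(Θ_s/|Θ_i|,…,Θ_t/|Θ_i|)·|Θ_i|^α·1{Θ_i ≠ 0}]. Then for every integer h ≠ 0 and every real x ≥ 0, P(Θ_h ≤ x) = 1 − E[|Θ_{−h}|^α · 1{Θ_0/|Θ_{−h}| > x}], where Θ_0/|Θ_{−h}| is interpreted as 0 when Θ_{−h} = 0. -/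
open MeasureTheory

/-- Time-change formula for the spectral tail process, as a hypothesis. -/
def TimeChangeFormula {Ω : Type*} [MeasureSpace Ω] (μ : Measure Ω)
    (Θ : ℤ → Ω → ℝ) (α : ℝ) : Prop :=
  ∀ (s t i : ℤ), s ≤ 0 → 0 ≤ t →
    ∀ f : (ℤ → ℝ) → ℝ, Measurable f → (∃ C : ℝ, ∀ y, |f y| ≤ C) →
      (∀ y y' : (ℤ → ℝ), (∀ j ∈ Set.Icc s t, y j = y' j) → f y = f y') →
      (∀ y : ℤ → ℝ, y 0 = 0 → f y = 0) →
      ∫ ω, f (fun j => Θ (j - i) ω) ∂μ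
        = ∫ ω, f (fun j => Θ j ω / |Θ i ω|) * |Θ i ω| ^ α *
            (if Θ i ω ≠ 0 then 1 else 0) ∂μ

theorem backward_representation_nonneg
    {Ω : Type*} [MeasureSpace Ω] (μ : Measure Ω) [IsProbabilityMeasure μ]
    (Θ : ℤ → Ω → ℝ) (hmeas : ∀ t, Measurable (Θ t))
    (α : ℝ) (hα : 0 < α)
    (hΘ0 : ∀ᵐ ω ∂μ, |Θ 0 ω| = 1)
    (hmom : ∀ i : ℤ, ∫ ω, |Θ i ω| ^ α ∂μ ≤ 1)
    (hint : ∀ i : ℤ, Integrable (fun ω => |Θ i ω| ^ α) μ)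
    (hTC : TimeChangeFormula μ Θ α) :
    ∀ h : ℤ, h ≠ 0 → ∀ x : ℝ, 0 ≤ x →
      (μ {ω | Θ h ω ≤ x}).toReal
        = 1 - ∫ ω, |Θ (-h) ω| ^ α *
            (if x < Θ 0 ω / |Θ (-h) ω| then 1 else 0) ∂μ := by
  intro h _ x hx
  set f : (ℤ → ℝ) → ℝ := fun y => if x < y 0 then 1 else 0 with hf
  have hfm : Measurable f := by
    apply Measurable.ite _ measurable_const measurable_const
    exact measurableSet_lt measurable_const (measurable_pi_apply 0)
  have hTC0 := hTC 0 0 (-h) le_rfl le_rfl f hfm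
    ⟨1, fun y => by by_cases hy : x < y 0 <;> simp [f, hy]⟩
    (fun y y' hyy' => by simp [f, hyy' 0 (by simp)])
    (fun y hy0 => by simp [f, hy0, not_lt.2 hx])
  -- identify the RHS of hTC0 with the RHS integral of the goal
  have hRHS : ∫ ω, f (fun j => Θ j ω / |Θ (-h) ω|) * |Θ (-h) ω| ^ α *
      (if Θ (-h) ω ≠ 0 then 1 else 0) ∂μ
      = ∫ ω, |Θ (-h) ω| ^ α * (if x < Θ 0 ω / |Θ (-h) ω| then 1 else 0) ∂μ := by
    apply integral_congr_ae
    filter_upwards with ω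
    by_cases hz : Θ (-h) ω = 0
    · simp [f, hz, abs_of_nonneg, not_lt.2 hx,
        Real.zero_rpow (ne_of_gt hα)]
    · by_cases hlt : x < Θ 0 ω / |Θ (-h) ω| <;> simp [f, hz, hlt, mul_comm]
  -- LHS of hTC0 is the probability that x < Θ h
  have hs : MeasurableSet {ω | x < Θ h ω} :=
    measurableSet_lt measurable_const (hmeas h)
  have hLHS : ∫ ω, f (fun j => Θ (j - -h) ω) ∂μ = (μ {ω | x < Θ h ω}).toReal := by
    have heq : (fun ω => f (fun j => Θ (j - -h) ω))
        = Set.indicator {ω | x < Θ h ω} (fun _ => (1 : ℝ)) := by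
      funext ω
      by_cases hlt : x < Θ h ω <;>
        simp [f, Set.indicator, hlt, show (0 : ℤ) - -h = h by ring]
    calc ∫ ω, f (fun j => Θ (j - -h) ω) ∂μ
        = ∫ ω, Set.indicator {ω | x < Θ h ω} (fun _ => (1 : ℝ)) ω ∂μ := by rw [heq]
      _ = (μ {ω | x < Θ h ω}).toReal := integral_indicator_one hs
  rw [hLHS] at hTC0
  rw [← hTC0, ← hRHS] at *
  -- probability complement
  have hcompl : {ω | Θ h ω ≤ x} = {ω | x < Θ h ω}ᶜ := by
    ext ω; simp [not_lt]
  rw [hcompl, measure_compl hs (measure_ne_top μ _),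
    ENNReal.toReal_sub_of_le (measure_mono (Set.subset_univ _)) (measure_ne_top μ _)]
  simp
end

section
/- Under the time-change formula hypothesis, for every integer h ≠ 0 and every real x < 0, P(Θ_h ≤ x) = E[|Θ_{−h}|^α · 1{Θ_0/|Θ_{−h}| ≤ x, Θ_{−h} ≠ 0}]. -/
open MeasureTheory

theorem TimeChangeFormula.integral_comp {Ω : Type*} [MeasureSpace Ω] {μ : Measure Ω}
    {Θ : ℤ → Ω → ℝ} {α : ℝ} (hTC : TimeChangeFormula μ Θ α) (h : ℤ) {g : ℝ → ℝ}
    (hg : Measurable g) (hg_bdd : ∃ C, ∀ u, |g u| ≤ C) (hg0 : g 0 = 0) :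
    ∫ ω, g (Θ h ω) ∂μ
      = ∫ ω, g (Θ 0 ω / |Θ (-h) ω|) * |Θ (-h) ω| ^ α *
          (if Θ (-h) ω ≠ 0 then 1 else 0) ∂μ := by
  obtain ⟨C, hC⟩ := hg_bdd
  have key := hTC 0 0 (-h) le_rfl le_rfl (fun y => g (y 0)) (hg.comp (measurable_pi_apply 0))
    ⟨C, fun y => hC (y 0)⟩ (fun y y' hyy' => by rw [hyy' 0 ⟨le_rfl, le_rfl⟩])
    (fun y hy => by rw [hy, hg0])
  simpa only [zero_sub, neg_neg] using key

theorem backward_representation_neg_general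
    {Ω : Type*} [MeasureSpace Ω] (μ : Measure Ω)
    (Θ : ℤ → Ω → ℝ) (hmeas : ∀ t, Measurable (Θ t))
    (α : ℝ)
    (hTC : TimeChangeFormula μ Θ α) :
    ∀ h : ℤ, h ≠ 0 → ∀ x : ℝ, x < 0 →
      (μ {ω | Θ h ω ≤ x}).toReal
        = ∫ ω, |Θ (-h) ω| ^ α *
            (if Θ 0 ω / |Θ (-h) ω| ≤ x ∧ Θ (-h) ω ≠ 0 then 1 else 0) ∂μ := by
  intro h _ x hx
  set g : ℝ → ℝ := (Set.Iic x).indicator 1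
  have hg_bdd : ∃ C, ∀ u, |g u| ≤ C :=
    ⟨1, fun u => by simp only [g, Set.indicator_apply]; split_ifs <;> norm_num⟩
  have key := hTC.integral_comp h (measurable_one.indicator measurableSet_Iic) hg_bdd
    (Set.indicator_of_notMem (Set.notMem_Iic.mpr hx) _)
  have hL : ∫ ω, g (Θ h ω) ∂μ = (μ {ω | Θ h ω ≤ x}).toReal := by
    simp_rw [g, ← Set.indicator_comp_right (Θ h)]
    exact integral_indicator_one (hmeas h measurableSet_Iic)
  rw [← hL, key]
  congr 1 with ω
  by_cases h1 : Θ 0 ω / |Θ (-h) ω| ≤ x <;> by_cases h2 : Θ (-h) ω ≠ 0 <;>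
    simp [h1, h2]

theorem backward_representation_neg
    {Ω : Type*} [MeasureSpace Ω] (μ : Measure Ω) [IsProbabilityMeasure μ]
    (Θ : ℤ → Ω → ℝ) (hmeas : ∀ t, Measurable (Θ t))
    (α : ℝ) (hα : 0 < α)
    (hΘ0 : ∀ᵐ ω ∂μ, |Θ 0 ω| = 1)
    (hTC : TimeChangeFormula μ Θ α) :
    ∀ h : ℤ, h ≠ 0 → ∀ x : ℝ, x < 0 →
      (μ {ω | Θ h ω ≤ x}).toReal
        = ∫ ω, |Θ (-h) ω| ^ α *
            (if Θ 0 ω / |Θ (-h) ω| ≤ x ∧ Θ (-h) ω ≠ 0 then 1 else 0) ∂μ :=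
  backward_representation_neg_general μ Θ hmeas α hTC
end

section
/- Under the time-change formula hypothesis, for every integer h ≠ 0 and real x ≥ 0: P(Θ_h > x, Θ_0 = 1) = E[Θ_{−h}^α · 1{1/Θ_{−h} > x, Θ_0 = 1, Θ_{−h} > 0}]. -/
open MeasureTheory

theorem TimeChangeFormula.integral_comp_two_coord {Ω : Type*} [MeasureSpace Ω]
    {μ : Measure Ω} {Θ : ℤ → Ω → ℝ} {α : ℝ} (hTC : TimeChangeFormula μ Θ α) (i : ℤ)
    {g : ℝ → ℝ → ℝ} (hg : Measurable (Function.uncurry g)) (hbdd : ∃ C, ∀ a b, |g a b| ≤ C)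
    (hg0 : ∀ b, g 0 b = 0) :
    ∫ ω, g (Θ (-i) ω) (Θ 0 ω) ∂μ
      = ∫ ω, g (Θ 0 ω / |Θ i ω|) (Θ i ω / |Θ i ω|) * |Θ i ω| ^ α *
          (if Θ i ω ≠ 0 then 1 else 0) ∂μ := by
  obtain ⟨C, hC⟩ := hbdd
  have hf : Measurable fun y : ℤ → ℝ => g (y 0) (y i) :=
    show Measurable (Function.uncurry g ∘ fun y : ℤ → ℝ => (y 0, y i)) from hg.comp (by fun_prop)
  have hdep : ∀ y y' : ℤ → ℝ, (∀ j ∈ Set.Icc (-|i|) |i|, y j = y' j) →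
      g (y 0) (y i) = g (y' 0) (y' i) := fun y y' hyy => by
    rw [hyy 0 ⟨by simp, abs_nonneg i⟩, hyy i ⟨neg_abs_le i, le_abs_self i⟩]
  simpa using hTC (-|i|) |i| i (by simp) (abs_nonneg i) (fun y => g (y 0) (y i)) hf
    ⟨C, fun y => hC _ _⟩ hdep (fun y hy => by simp only [hy, hg0])

theorem div_abs_eq_one_iff {a : ℝ} : a / |a| = 1 ↔ 0 < a := by
  rcases lt_trichotomy a 0 with ha | rfl | ha
  · rw [abs_of_neg ha, div_neg, div_self ha.ne]; norm_num [ha.not_gt]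
  · simp
  · simp [abs_of_pos ha, ha.ne', ha]

theorem timeChange_indicator_eq {x θ₀ θ α : ℝ} (hx : 0 ≤ x) (hθ₀ : θ₀ = 1 ∨ θ₀ = -1) :
    (if x < θ₀ / |θ| ∧ θ / |θ| = 1 then 1 else 0) * |θ| ^ α * (if θ ≠ 0 then 1 else 0)
      = |θ| ^ α * (if x < 1 / θ ∧ θ₀ = 1 ∧ 0 < θ then 1 else 0) := by
  simp only [div_abs_eq_one_iff]
  by_cases hθ : 0 < θ
  · rw [abs_of_pos hθ]
    rcases hθ₀ with rfl | rfl
    · simp [hθ.ne', mul_comm]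
    · have : ¬ x < -1 / θ := not_lt.2 (hx.trans' (div_neg_of_neg_of_pos (by norm_num) hθ).le)
      norm_num [this]
  · simp [hθ]

theorem backward_representation_cond_pos_general
    {Ω : Type*} [MeasureSpace Ω] (μ : Measure Ω)
    (Θ : ℤ → Ω → ℝ) (hmeas : ∀ t, Measurable (Θ t))
    (α : ℝ)
    (hΘ0 : ∀ᵐ ω ∂μ, Θ 0 ω = 1 ∨ Θ 0 ω = -1)
    (hTC : TimeChangeFormula μ Θ α) :
    ∀ h : ℤ, h ≠ 0 → ∀ x : ℝ, 0 ≤ x →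
      (μ {ω | x < Θ h ω ∧ Θ 0 ω = 1}).toReal
        = ∫ ω, |Θ (-h) ω| ^ α *
            (if x < 1 / Θ (-h) ω ∧ Θ 0 ω = 1 ∧ 0 < Θ (-h) ω then 1 else 0) ∂μ := by
  intro h _ x hx
  let g : ℝ → ℝ → ℝ := fun a b => if x < a ∧ b = 1 then 1 else 0
  have hg : Measurable (Function.uncurry g) :=
    Measurable.ite ((measurableSet_lt measurable_const measurable_fst).inter
      (measurable_snd (measurableSet_singleton 1))) measurable_const measurable_const
  have hbdd : ∃ C, ∀ a b, |g a b| ≤ C := ⟨1, fun a b => by by_cases x < a ∧ b = 1 <;> simp [g, *]⟩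
  have hS : MeasurableSet {ω | x < Θ h ω ∧ Θ 0 ω = 1} :=
    (measurableSet_lt measurable_const (hmeas h)).inter ((hmeas 0) (measurableSet_singleton 1))
  have hTC' := hTC.integral_comp_two_coord (-h) hg hbdd fun b => by simp [g, not_lt.2 hx]
  rw [neg_neg] at hTC'
  calc (μ {ω | x < Θ h ω ∧ Θ 0 ω = 1}).toReal
      = ∫ ω, g (Θ h ω) (Θ 0 ω) ∂μ := by
        rw [← measureReal_def, ← integral_indicator_one hS]
        simp [Set.indicator_apply, g]
    _ = _ := hTC'
    _ = _ := integral_congr_ae (hΘ0.mono fun ω hω => timeChange_indicator_eq hx hω)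

theorem backward_representation_cond_pos
    {Ω : Type*} [MeasureSpace Ω] (μ : Measure Ω) [IsProbabilityMeasure μ]
    (Θ : ℤ → Ω → ℝ) (hmeas : ∀ t, Measurable (Θ t))
    (α : ℝ) (hα : 0 < α)
    (hΘ0 : ∀ᵐ ω ∂μ, Θ 0 ω = 1 ∨ Θ 0 ω = -1)
    (hTC : TimeChangeFormula μ Θ α) :
    ∀ h : ℤ, h ≠ 0 → ∀ x : ℝ, 0 ≤ x →
      (μ {ω | x < Θ h ω ∧ Θ 0 ω = 1}).toReal
        = ∫ ω, |Θ (-h) ω| ^ α *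
            (if x < 1 / Θ (-h) ω ∧ Θ 0 ω = 1 ∧ 0 < Θ (-h) ω then 1 else 0) ∂μ :=
  backward_representation_cond_pos_general μ Θ hmeas α hΘ0 hTC
end

section
/- Under the time-change formula hypothesis, for every integer h ≠ 0 and real x < 0: P(Θ_h ≤ x, Θ_0 = 1) = E[|Θ_{−h}|^α · 1{−1/Θ_{−h} ≤ x, Θ_{−h} > 0, Θ_0 = −1}]. -/
/-!
Apply the time-change formula with shift `-h` to the indicator of `{y | y 0 ≤ x ∧ y (-h) = 1}`.
On the right-hand side the constraint `Θ (-h) / |Θ (-h)| = 1` forces `Θ (-h) > 0`, and then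
`Θ 0 / Θ (-h) ≤ x < 0` forces `Θ 0 = -1`.
-/

open MeasureTheory

theorem TimeChangeFormula.integral_comp_two {Ω : Type*} [MeasureSpace Ω] {μ : Measure Ω}
    {Θ : ℤ → Ω → ℝ} {α : ℝ} (hTC : TimeChangeFormula μ Θ α) (i k : ℤ) (g : ℝ → ℝ → ℝ)
    (hg : Measurable (Function.uncurry g)) (C : ℝ) (hC : ∀ a b, |g a b| ≤ C)
    (hg0 : ∀ b, g 0 b = 0) :
    ∫ ω, g (Θ (-i) ω) (Θ (k - i) ω) ∂μ
      = ∫ ω, g (Θ 0 ω / |Θ i ω|) (Θ k ω / |Θ i ω|) * |Θ i ω| ^ α *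
          (if Θ i ω ≠ 0 then 1 else 0) ∂μ := by
  have h0 : (0 : ℤ) ∈ Set.Icc (min k 0) (max k 0) := ⟨min_le_right _ _, le_max_right _ _⟩
  have hk : k ∈ Set.Icc (min k 0) (max k 0) := ⟨min_le_left _ _, le_max_left _ _⟩
  have := hTC (min k 0) (max k 0) i (min_le_right _ _) (le_max_right _ _) (fun y => g (y 0) (y k))
    (hg.comp (by fun_prop : Measurable fun y : ℤ → ℝ => (y 0, y k))) ⟨C, fun y => hC _ _⟩
    (fun y y' hyy' => by rw [hyy' 0 h0, hyy' k hk]) (fun y hy => by rw [hy, hg0])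
  simpa only [zero_sub] using this

theorem div_le_of_neg_iff {a b x : ℝ} (ha : 0 < a) (hx : x < 0) (hb : b = 1 ∨ b = -1) :
    b / a ≤ x ↔ -1 / a ≤ x ∧ b = -1 := by
  rcases hb with rfl | rfl
  · have : 0 < 1 / a := by positivity
    constructor
    · intro h; linarith
    · rintro ⟨-, h⟩; norm_num at h
  · simp

theorem ite_div_abs_mul_rpow_abs {α x a b : ℝ} (hx : x < 0) (hb : b = 1 ∨ b = -1) :
    (if b / |a| ≤ x ∧ a / |a| = 1 then (1 : ℝ) else 0) * |a| ^ α * (if a ≠ 0 then 1 else 0)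
      = |a| ^ α * (if -1 / a ≤ x ∧ 0 < a ∧ b = -1 then 1 else 0) := by
  by_cases ha : 0 < a
  · rw [abs_of_pos ha, div_self ha.ne']
    simp only [div_le_of_neg_iff ha hx hb, ha, ha.ne', and_true, true_and, ne_eq,
      not_false_eq_true, if_true, one_mul, mul_comm]
  · simp [ha, div_abs_eq_one_iff]

theorem backward_representation_cond_neg_general
    {Ω : Type*} [MeasureSpace Ω] (μ : Measure Ω)
    (Θ : ℤ → Ω → ℝ) (hmeas : ∀ t, Measurable (Θ t))
    (α : ℝ)
    (hΘ0 : ∀ᵐ ω ∂μ, Θ 0 ω = 1 ∨ Θ 0 ω = -1)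
    (hTC : TimeChangeFormula μ Θ α) :
    ∀ h : ℤ, h ≠ 0 → ∀ x : ℝ, x < 0 →
      (μ {ω | Θ h ω ≤ x ∧ Θ 0 ω = 1}).toReal
        = ∫ ω, |Θ (-h) ω| ^ α *
            (if -1 / Θ (-h) ω ≤ x ∧ 0 < Θ (-h) ω ∧ Θ 0 ω = -1 then 1 else 0) ∂μ := by
  intro h _ x hx
  let S : Set (ℝ × ℝ) := {p | p.1 ≤ x ∧ p.2 = 1}
  have hS : MeasurableSet S :=
    (measurableSet_le measurable_fst measurable_const).inter
      (measurable_snd (measurableSet_singleton 1))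
  have hset : MeasurableSet {ω | Θ h ω ≤ x ∧ Θ 0 ω = 1} :=
    hS.preimage ((hmeas h).prodMk (hmeas 0))
  have hTC' := hTC.integral_comp_two (-h) (-h) (fun a b => S.indicator 1 (a, b))
    (measurable_const.indicator hS) 1 (fun a b => by by_cases hab : (a, b) ∈ S <;> simp [hab])
    (fun b => Set.indicator_of_notMem (fun hb => hx.not_ge hb.1) _)
  simp only [neg_neg, sub_self, Set.indicator_apply, Set.mem_ofPred_eq, S, Pi.one_apply] at hTC'
  rw [← measureReal_def, ← integral_indicator_one hset]
  simp only [Set.indicator_apply, Set.mem_ofPred_eq, Pi.one_apply]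
  rw [hTC']
  refine integral_congr_ae ?_
  filter_upwards [hΘ0] with ω hω
  exact ite_div_abs_mul_rpow_abs hx hω

theorem backward_representation_cond_neg
    {Ω : Type*} [MeasureSpace Ω] (μ : Measure Ω) [IsProbabilityMeasure μ]
    (Θ : ℤ → Ω → ℝ) (hmeas : ∀ t, Measurable (Θ t))
    (α : ℝ) (hα : 0 < α)
    (hΘ0 : ∀ᵐ ω ∂μ, Θ 0 ω = 1 ∨ Θ 0 ω = -1)
    (hTC : TimeChangeFormula μ Θ α) :
    ∀ h : ℤ, h ≠ 0 → ∀ x : ℝ, x < 0 →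
      (μ {ω | Θ h ω ≤ x ∧ Θ 0 ω = 1}).toReal
        = ∫ ω, |Θ (-h) ω| ^ α *
            (if -1 / Θ (-h) ω ≤ x ∧ 0 < Θ (-h) ω ∧ Θ 0 ω = -1 then 1 else 0) ∂μ :=
  backward_representation_cond_neg_general μ Θ hmeas α hΘ0 hTC
end

section
/- Let Θ be a real random variable with |Θ| ≤ some a.s. bound and E[|Θ|^α] < ∞ for α > 0, and Y₀ an independent Pareto(α) random variable (P(Y₀ > y) = y^{-α}, y ≥ 1). Then E[log⁺(Y₀·|Θ|)] = E[(|Θ|^α ∧ 1)·(log⁺|Θ| + 1/α)]. -/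
open MeasureTheory ProbabilityTheory

/-!
Since `log Y₀` is exponential with rate `α`, the layer-cake formula gives, for fixed `t > 0`,
`E[log⁺(Y₀ t)] = ∫₀^∞ P(Y₀ > eˢ / t) ds = ∫₀^∞ min(e^{-α(s - log t)}, 1) ds`,
which splits at `max (log t) 0` into `log⁺ t` plus an exponential tail `min(t^α, 1) / α`.
Independence of `Y₀` and `Θ` then lets one integrate this identity, at `t = |Θ|`, against the
law of `Θ`.
-/

open Set Real ENNReal

lemma lintegral_Ioi_exp_neg_mul_sub {α : ℝ} (hα : 0 < α) (b c : ℝ) :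
    ∫⁻ s in Ioi b, ENNReal.ofReal (exp (-α * (s - c))) =
      ENNReal.ofReal (exp (-α * (b - c)) / α) := by
  have hshift : ∀ s, exp (-α * (s - c)) = exp (α * c) * exp (-α * s) := fun s => by
    rw [← exp_add]; ring_nf
  simp_rw [hshift]
  rw [← ofReal_integral_eq_lintegral_ofReal ((exp_neg_integrableOn_Ioi b hα).const_mul _)
      (ae_of_all _ fun s => by positivity), integral_const_mul,
    integral_exp_mul_Ioi (neg_lt_zero.2 hα), neg_div_neg_eq, mul_div_assoc]

lemma lintegral_Ioi_zero_min_exp_neg_mul_sub {α : ℝ} (hα : 0 < α) (c : ℝ) :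
    ∫⁻ s in Ioi 0, ENNReal.ofReal (min (exp (-α * (s - c))) 1) =
      ENNReal.ofReal (min (exp (α * c)) 1 * (max c 0 + 1 / α)) := by
  set b := max c 0
  have hb : 0 ≤ b := le_max_right c 0
  have h_head : ∀ s ∈ Ioc 0 b, ENNReal.ofReal (min (exp (-α * (s - c))) 1) = 1 := by
    rintro s ⟨hs0, hsb⟩
    have hsc : s ≤ c := by
      rcases le_max_iff.1 hsb with h | h
      · exact h
      · linarith
    rw [min_eq_right (one_le_exp (by nlinarith)), ofReal_one]
  have h_tail : ∀ s ∈ Ioi b,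
      ENNReal.ofReal (min (exp (-α * (s - c))) 1) = ENNReal.ofReal (exp (-α * (s - c))) := by
    intro s hs
    have hcs : c < s := lt_of_le_of_lt (le_max_left c 0) hs
    rw [min_eq_left (exp_le_one_iff.2 (by nlinarith))]
  rw [← Ioc_union_Ioi_eq_Ioi hb, lintegral_union measurableSet_Ioi (Ioc_disjoint_Ioi le_rfl),
    setLIntegral_congr_fun measurableSet_Ioc h_head,
    setLIntegral_congr_fun measurableSet_Ioi h_tail,
    lintegral_Ioi_exp_neg_mul_sub hα, setLIntegral_one, volume_Ioc, sub_zero,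
    ← ofReal_add hb (by positivity)]
  congr 1
  rcases le_total c 0 with hc | hc
  · rw [show b = 0 from max_eq_right hc, min_eq_left (exp_le_one_iff.2 (by nlinarith))]
    ring_nf
  · rw [show b = c from max_eq_left hc, min_eq_right (one_le_exp (by nlinarith))]
    simp

section Pareto

variable {α : ℝ} {ν : Measure ℝ}

lemma measure_Ioi_one_of_pareto
    (hsurv : ∀ a, 1 ≤ a → ν (Ioi a) = ENNReal.ofReal (a ^ (-α))) : ν (Ioi 1) = 1 := by
  simpa using hsurv 1 le_rfl

variable [IsProbabilityMeasure ν]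

lemma measure_Ioi_eq_min_rpow_neg (hα : 0 < α)
    (hsurv : ∀ a, 1 ≤ a → ν (Ioi a) = ENNReal.ofReal (a ^ (-α))) {a : ℝ} (ha : 0 < a) :
    ν (Ioi a) = ENNReal.ofReal (min (a ^ (-α)) 1) := by
  rcases le_or_gt 1 a with ha1 | ha1
  · rw [hsurv a ha1, min_eq_left (rpow_le_one_of_one_le_of_nonpos ha1 (by linarith))]
  · rw [min_eq_right (one_le_rpow_of_pos_of_le_one_of_nonpos ha ha1.le (by linarith)),
      ofReal_one]
    exact le_antisymm prob_le_one
      (measure_Ioi_one_of_pareto hsurv ▸ measure_mono (Ioi_subset_Ioi ha1.le))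

lemma measure_lt_max_log_mul_eq (hα : 0 < α)
    (hsurv : ∀ a, 1 ≤ a → ν (Ioi a) = ENNReal.ofReal (a ^ (-α))) {t s : ℝ} (ht : 0 < t)
    (hs : 0 ≤ s) :
    ν {y | s < max (log (y * t)) 0} = ENNReal.ofReal (min (exp (-α * (s - log t))) 1) := by
  have h_pos : ∀ᵐ y ∂ν, 0 < y := by
    have h_one_lt : ∀ᵐ y ∂ν, 1 < y :=
      (prob_compl_eq_zero_iff measurableSet_Ioi).2 (measure_Ioi_one_of_pareto hsurv)
    filter_upwards [h_one_lt] with y hy using one_pos.trans hy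
  -- `log` is even, so the level set is a half-line only up to the null set `Iic 0`.
  have h_set : {y | s < max (log (y * t)) 0} =ᵐ[ν] Ioi (exp s / t) := by
    refine Filter.eventuallyEq_set.2 ?_
    filter_upwards [h_pos] with y hy
    rw [mem_Ioi, lt_max_iff, or_iff_left (by linarith), lt_log_iff_exp_lt (by positivity),
      div_lt_iff₀ ht]
  have h_pow : (exp s / t) ^ (-α) = exp (-α * (s - log t)) := by
    rw [rpow_def_of_pos (by positivity), log_div (exp_pos s).ne' ht.ne', log_exp, mul_comm]
  rw [measure_congr h_set, measure_Ioi_eq_min_rpow_neg hα hsurv (by positivity), h_pow]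

lemma lintegral_max_log_mul_eq (hα : 0 < α)
    (hsurv : ∀ a, 1 ≤ a → ν (Ioi a) = ENNReal.ofReal (a ^ (-α))) {t : ℝ} (ht : 0 ≤ t) :
    ∫⁻ y, ENNReal.ofReal (max (log (y * t)) 0) ∂ν =
      ENNReal.ofReal (min (t ^ α) 1 * (max (log t) 0 + 1 / α)) := by
  rcases ht.eq_or_lt with rfl | ht
  · simp [zero_rpow hα.ne']
  rw [lintegral_eq_lintegral_meas_lt ν (f := fun y => max (log (y * t)) 0)
      (ae_of_all _ fun y => le_max_right _ _) (by fun_prop),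
    setLIntegral_congr_fun measurableSet_Ioi
      fun s hs => measure_lt_max_log_mul_eq hα hsurv ht (le_of_lt hs),
    lintegral_Ioi_zero_min_exp_neg_mul_sub hα, rpow_def_of_pos ht, mul_comm (log t)]

end Pareto

lemma ProbabilityTheory.IndepFun.lintegral_comp_eq_lintegral_lintegral {Ω β γ : Type*}
    [MeasurableSpace Ω] [MeasurableSpace β] [MeasurableSpace γ] {μ : Measure Ω}
    [IsFiniteMeasure μ] {X : Ω → β} {Y : Ω → γ}
    (hXY : IndepFun X Y μ) (hX : Measurable X) (hY : Measurable Y) {f : β × γ → ℝ≥0∞}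
    (hf : Measurable f) :
    ∫⁻ ω, f (X ω, Y ω) ∂μ = ∫⁻ z, ∫⁻ x, f (x, z) ∂(μ.map X) ∂(μ.map Y) := by
  rw [← lintegral_map hf (hX.prodMk hY),
    (indepFun_iff_map_prod_eq_prod_map_map hX.aemeasurable hY.aemeasurable).1 hXY,
    lintegral_prod_symm _ hf.aemeasurable]

theorem logplus_product_pareto_general
    {Ω : Type*} [MeasureSpace Ω] (μ : Measure Ω) [IsProbabilityMeasure μ]
    (α : ℝ) (hα : 0 < α)
    (Y Θ : Ω → ℝ) (hYm : Measurable Y) (hΘm : Measurable Θ)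
    (hIndep : IndepFun Y Θ μ)
    (hSurv : ∀ y : ℝ, 1 ≤ y → μ {ω | y < Y ω} = ENNReal.ofReal (y ^ (-α))) :
    ∫ ω, max (Real.log (Y ω * |Θ ω|)) 0 ∂μ
      = ∫ ω, min (|Θ ω| ^ α) 1 * (max (Real.log |Θ ω|) 0 + 1 / α) ∂μ := by
  have hlaw : ∀ a, 1 ≤ a → μ.map Y (Ioi a) = ENNReal.ofReal (a ^ (-α)) := fun a ha => by
    rw [Measure.map_apply hYm measurableSet_Ioi]
    exact hSurv a ha
  have hrhs_nonneg : ∀ ω, 0 ≤ min (|Θ ω| ^ α) 1 * (max (log |Θ ω|) 0 + 1 / α) :=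
    fun ω => mul_nonneg (le_min (by positivity) zero_le_one) (by positivity)
  rw [integral_eq_lintegral_of_nonneg_ae (f := fun ω => max (log (Y ω * |Θ ω|)) 0)
      (ae_of_all _ fun ω => le_max_right _ _)
      (Measurable.aestronglyMeasurable (by fun_prop)),
    integral_eq_lintegral_of_nonneg_ae (ae_of_all _ hrhs_nonneg)
      (Measurable.aestronglyMeasurable (by fun_prop)),
    hIndep.lintegral_comp_eq_lintegral_lintegral hYm hΘm
      (f := fun p => ENNReal.ofReal (max (log (p.1 * |p.2|)) 0)) (by fun_prop),
    ← lintegral_map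
      (f := fun θ => ENNReal.ofReal (min (|θ| ^ α) 1 * (max (log |θ|) 0 + 1 / α)))
      (by fun_prop) hΘm]
  have : IsProbabilityMeasure (μ.map Y) := Measure.isProbabilityMeasure_map hYm.aemeasurable
  congr 1
  exact lintegral_congr fun θ => lintegral_max_log_mul_eq hα hlaw (abs_nonneg θ)

theorem logplus_product_pareto
    {Ω : Type*} [MeasureSpace Ω] (μ : Measure Ω) [IsProbabilityMeasure μ]
    (α : ℝ) (hα : 0 < α)
    (Y Θ : Ω → ℝ) (hYm : Measurable Y) (hΘm : Measurable Θ)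
    (hIndep : IndepFun Y Θ μ)
    (hSurv : ∀ y : ℝ, 1 ≤ y → μ {ω | y < Y ω} = ENNReal.ofReal (y ^ (-α)))
    (hYge : ∀ᵐ ω ∂μ, 1 ≤ Y ω)
    (hBdd : ∃ B : ℝ, ∀ᵐ ω ∂μ, |Θ ω| ≤ B)
    (hIntPow : Integrable (fun ω => |Θ ω| ^ α) μ)
    (hIntRHS : Integrable
      (fun ω => min (|Θ ω| ^ α) 1 * (max (Real.log |Θ ω|) 0 + 1 / α)) μ) :
    ∫ ω, max (Real.log (Y ω * |Θ ω|)) 0 ∂μ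
      = ∫ ω, min (|Θ ω| ^ α) 1 * (max (Real.log |Θ ω|) 0 + 1 / α) ∂μ :=
  logplus_product_pareto_general μ α hα Y Θ hYm hΘm hIndep hSurv
end

section
/- Let X be a nonnegative random variable with regularly varying tail of index −α < 0, i.e., P(X > uy)/P(X > u) → y^{-α} as u → ∞ for every y ≥ 1. Then E[log(X/u) | X > u] → 1/α as u → ∞, provided there exists u₀ and δ > 0 with E[(log⁺(X/u))^{1+δ} | X > u] bounded uniformly in u ≥ u₀. -/
/-!
With `F u = P(X > u)`, the layer-cake formula gives
`E[log (X / u) | X > u] = ∫₀^∞ F (u eᵗ) / F u dt`, whose integrand tends to `e^{-αt}` pointwise.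
The domination comes from regular variation itself: eventually `F (u e) ≤ e^{-α/2} F u`, and
iterating this along `u, u e, u e², …` and using that `F` is antitone gives the Potter-type bound
`F (u eᵗ) ≤ e^{α (1 - t) / 2} F u`, so dominated convergence applies.
-/

open MeasureTheory Filter Set Real

theorem setIntegral_log_div_eq_integral_measure {Ω : Type*} [MeasurableSpace Ω] (μ : Measure Ω)
    [IsFiniteMeasure μ] {X : Ω → ℝ} (hX : Measurable X) {u : ℝ} (hu : 0 < u) :
    ∫ ω in {ω | u < X ω}, log (X ω / u) ∂μ =
      ∫ t in Ioi 0, (μ {ω | u * exp t < X ω}).toReal := by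
  have hlog_nonneg : 0 ≤ᵐ[μ.restrict {ω | u < X ω}] fun ω => log (X ω / u) :=
    (ae_restrict_iff' (measurableSet_lt measurable_const hX)).2 <| ae_of_all _ fun ω hω =>
      log_nonneg ((one_le_div hu).2 (le_of_lt hω))
  have hlog_meas : Measurable fun ω => log (X ω / u) := (hX.div_const u).log
  have hlevel : ∀ t > 0, μ.restrict {ω | u < X ω} {ω | t < log (X ω / u)} =
      μ {ω | u * exp t < X ω} := by
    intro t ht
    rw [Measure.restrict_apply (measurableSet_lt measurable_const hlog_meas)]
    congr 1
    ext ω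
    simp only [mem_inter_iff, mem_ofPred_eq]
    constructor
    · rintro ⟨hlt, huX⟩
      rwa [lt_log_iff_exp_lt (div_pos (hu.trans huX) hu), lt_div_iff₀ hu, mul_comm] at hlt
    · intro h
      have huX : u < X ω := (lt_mul_of_one_lt_right hu (one_lt_exp_iff.2 ht)).trans h
      refine ⟨?_, huX⟩
      rwa [lt_log_iff_exp_lt (div_pos (hu.trans huX) hu), lt_div_iff₀ hu, mul_comm]
  rw [integral_eq_lintegral_of_nonneg_ae hlog_nonneg hlog_meas.aestronglyMeasurable,
    lintegral_eq_lintegral_meas_lt _ hlog_nonneg hlog_meas.aemeasurable,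
    setLIntegral_congr_fun measurableSet_Ioi hlevel, integral_toReal]
  · refine (Antitone.measurable fun a b hab => measure_mono ?_).aemeasurable
    exact fun ω (hω : u * exp b < X ω) =>
      (mul_le_mul_of_nonneg_left (exp_le_exp.2 hab) hu.le).trans_lt hω
  · exact ae_of_all _ fun t => measure_lt_top μ _

theorem Antitone.eventually_apply_mul_exp_le {F : ℝ → ℝ} (hF : Antitone F)
    (hF0 : ∀ u, 0 ≤ F u) {b : ℝ} (hb : 0 ≤ b) (h : ∀ᶠ u in atTop, F (u * exp 1) ≤ exp (-b) * F u) :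
    ∀ᶠ u in atTop, ∀ s, 0 ≤ s → F (u * exp s) ≤ exp (b * (1 - s)) * F u := by
  obtain ⟨U, hU⟩ := eventually_atTop.1 (h.and (eventually_ge_atTop 0))
  filter_upwards [eventually_ge_atTop U] with u hu s hs
  have hu0 : 0 ≤ u := (hU U le_rfl).2.trans hu
  have hnat : ∀ n : ℕ, F (u * exp n) ≤ exp (-b * n) * F u := by
    intro n
    induction n with
    | zero => simp
    | succ n ih =>
      have hun : U ≤ u * exp n := hu.trans (le_mul_of_one_le_right hu0 (one_le_exp n.cast_nonneg))
      calc F (u * exp ↑(n + 1)) = F (u * exp n * exp 1) := by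
            rw [mul_assoc, ← exp_add, Nat.cast_succ]
        _ ≤ exp (-b) * F (u * exp n) := (hU _ hun).1
        _ ≤ exp (-b) * (exp (-b * n) * F u) := by gcongr
        _ = exp (-b * ↑(n + 1)) * F u := by
            rw [← mul_assoc, ← exp_add]; push_cast; ring_nf
  calc F (u * exp s) ≤ F (u * exp ⌊s⌋₊) :=
        hF (mul_le_mul_of_nonneg_left (exp_le_exp.2 (Nat.floor_le hs)) hu0)
    _ ≤ exp (-b * ⌊s⌋₊) * F u := hnat _
    _ ≤ exp (b * (1 - s)) * F u := by
        gcongr ?_ * _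
        · exact hF0 u
        · have := Nat.sub_one_lt_floor s
          exact exp_le_exp.2 (by nlinarith)

theorem tendsto_integral_div_of_regularVariation {F : ℝ → ℝ} (hF : Antitone F)
    (hF0 : ∀ u, 0 ≤ F u) {α : ℝ} (hα : 0 < α)
    (hRV : ∀ y : ℝ, 1 ≤ y → Tendsto (fun u => F (u * y) / F u) atTop (nhds (y ^ (-α)))) :
    Tendsto (fun u => ∫ t in Ioi 0, F (u * exp t) / F u) atTop (nhds (1 / α)) := by
  have hpos : ∀ᶠ u in atTop, 0 < F u := by
    filter_upwards [(hRV 1 le_rfl).eventually (eventually_ne_nhds (b := 0) (by simp))] with u hu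
    simp only [mul_one] at hu
    exact (hF0 u).lt_of_ne' fun h => hu (by simp [h])
  have hdecay : ∀ᶠ u in atTop, F (u * exp 1) ≤ exp (-(α / 2)) * F u := by
    have hlt : exp 1 ^ (-α) < exp (-(α / 2)) := by
      rw [exp_one_rpow]; exact exp_lt_exp.2 (by linarith)
    filter_upwards [hpos, (hRV (exp 1) (one_le_exp zero_le_one)).eventually
      (eventually_lt_nhds hlt)] with u hu hratio
    exact ((div_lt_iff₀ hu).1 hratio).le
  have hpotter := hF.eventually_apply_mul_exp_le hF0 (by positivity) hdecay
  have hlim : ∫ t in Ioi 0, exp (-α * t) = 1 / α := by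
    rw [integral_exp_mul_Ioi (by linarith) 0]; field_simp; simp
  rw [← hlim]
  refine tendsto_integral_filter_of_dominated_convergence (fun t => exp (α / 2 * (1 - t)))
    (Eventually.of_forall fun u => ?_) ?_ ?_ ?_
  · exact ((hF.measurable.comp (measurable_const.mul measurable_exp)).div_const _)
      |>.aestronglyMeasurable
  · filter_upwards [hpos, hpotter] with u hu hP
    refine (ae_restrict_iff' measurableSet_Ioi).2 (ae_of_all _ fun t ht => ?_)
    rw [norm_of_nonneg (div_nonneg (hF0 _) hu.le), div_le_iff₀ hu]
    exact hP t (le_of_lt ht)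
  · have : IntegrableOn (fun t => exp (α / 2) * exp (-(α / 2) * t)) (Ioi 0) :=
      (exp_neg_integrableOn_Ioi 0 (half_pos hα)).const_mul (exp (α / 2))
    refine this.congr_fun (fun t _ => ?_) measurableSet_Ioi
    dsimp only
    rw [← exp_add]; ring_nf
  · refine (ae_restrict_iff' measurableSet_Ioi).2 (ae_of_all _ fun t ht => ?_)
    have h := hRV (exp t) (one_le_exp (le_of_lt ht))
    rwa [← exp_mul, mul_comm] at h

theorem hill_consistency_regular_variation_general
    {Ω : Type*} [MeasureSpace Ω] (μ : Measure Ω) [IsProbabilityMeasure μ]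
    (α : ℝ) (hα : 0 < α) (X : Ω → ℝ) (hXm : Measurable X)
    (hRV : ∀ y : ℝ, 1 ≤ y →
      Tendsto (fun u : ℝ => (μ {ω | u * y < X ω}).toReal / (μ {ω | u < X ω}).toReal)
        atTop (nhds (y ^ (-α)))) :
    Tendsto (fun u : ℝ =>
        (∫ ω in {ω | u < X ω}, Real.log (X ω / u) ∂μ) / (μ {ω | u < X ω}).toReal)
      atTop (nhds (1 / α)) := by
  have htail : Antitone fun u : ℝ => (μ {ω | u < X ω}).toReal := fun a b hab =>
    ENNReal.toReal_mono (measure_ne_top _ _) (measure_mono fun ω hω => hab.trans_lt hω)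
  refine (tendsto_integral_div_of_regularVariation htail (fun _ => ENNReal.toReal_nonneg) hα
    hRV).congr' ?_
  filter_upwards [eventually_gt_atTop 0] with u hu
  rw [setIntegral_log_div_eq_integral_measure μ hXm hu, integral_div]

theorem hill_consistency_regular_variation
    {Ω : Type*} [MeasureSpace Ω] (μ : Measure Ω) [IsProbabilityMeasure μ]
    (α : ℝ) (hα : 0 < α) (X : Ω → ℝ) (hXm : Measurable X)
    (hXnn : ∀ ω, 0 ≤ X ω)
    (hpos : ∀ u : ℝ, 0 < μ {ω | u < X ω})
    (hRV : ∀ y : ℝ, 1 ≤ y →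
      Tendsto (fun u : ℝ => (μ {ω | u * y < X ω}).toReal / (μ {ω | u < X ω}).toReal)
        atTop (nhds (y ^ (-α))))
    (hUI : ∃ u₀ : ℝ, ∃ δ : ℝ, 0 < δ ∧ ∃ K : ℝ, ∀ u : ℝ, u₀ ≤ u →
      (∫ ω in {ω | u < X ω}, max (Real.log (X ω / u)) 0 ^ (1 + δ) ∂μ) /
        (μ {ω | u < X ω}).toReal ≤ K) :
    Tendsto (fun u : ℝ =>
        (∫ ω in {ω | u < X ω}, Real.log (X ω / u) ∂μ) / (μ {ω | u < X ω}).toReal)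
      atTop (nhds (1 / α)) :=
  hill_consistency_regular_variation_general μ α hα X hXm hRV
end
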